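/- With the same setup: Π_A, Π_B orthogonal projectors, U = (2Π_A - I)(2Π_B - I), δ ≥ 0, Θ ∈ (0,π), Λ_Θ the projector onto small-phase eigenspaces of U. Suppose ψ₀ is a unit vector, and there exist vectors w_A, w_B with ψ₀ = w_A + w_B, ‖(I-Π_A)w_A‖² ≤ δ, ‖(I-Π_B)w_B‖² ≤ δ, and ψ₀ orthogonal to the range of Π_B. Then ‖Λ_Θ ψ₀‖ ≤ (Θ/2)‖w_A‖ + 2√δ. -/

import Mathlib

/-- The orthogonal projection onto a subspace `K`, as an endomorphism of `H`. -/
noncomputable def projOnto {H : Type*} [NormedAddCommGroup H] [InnerProductSpace ℂ H]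
    [FiniteDimensional ℂ H] (K : Submodule ℂ H) : H →L[ℂ] H :=
  K.subtypeL.comp K.orthogonalProjectionOnto

/-- The orthogonal projector onto the span of the eigenvectors of `U` with eigenvalue
`e^{iφ}` for `|φ| ≤ Θ`. -/
noncomputable def smallPhaseProj {H : Type*} [NormedAddCommGroup H] [InnerProductSpace ℂ H]
    [FiniteDimensional ℂ H] (U : H →L[ℂ] H) (Θ : ℝ) : H →L[ℂ] H :=
  projOnto (Submodule.span ℂ
    {x : H | ∃ φ : ℝ, |φ| ≤ Θ ∧ U x = Complex.exp (φ * Complex.I) • x})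

local notation "⟪" x ", " y "⟫" => @inner ℂ _ _ x y

section aux
variable {H : Type*} [NormedAddCommGroup H] [InnerProductSpace ℂ H] [FiniteDimensional ℂ H]


lemma projOnto_mem (K : Submodule ℂ H) (x : H) : projOnto K x ∈ K := (K.orthogonalProjectionOnto x).2

lemma projOnto_of_mem (K : Submodule ℂ H) {x : H} (hx : x ∈ K) : projOnto K x = x :=
  (Submodule.starProjection_eq_self_iff (K := K)).mpr hx

lemma projOnto_of_orth (K : Submodule ℂ H) {x : H} (hx : x ∈ Kᗮ) : projOnto K x = 0 := by
  simp [projOnto, Submodule.orthogonalProjectionOnto_apply_of_mem_orthogonal hx]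

lemma inner_projOnto (K : Submodule ℂ H) (x y : H) : ⟪projOnto K x, y⟫ = ⟪x, projOnto K y⟫ :=
  Submodule.inner_starProjection_left_eq_right (K := K) x y

lemma projOnto_idem (K : Submodule ℂ H) (x : H) :
    projOnto K (projOnto K x) = projOnto K x := projOnto_of_mem _ (projOnto_mem _ _)

lemma refl_apply (K : Submodule ℂ H) (x : H) :
    ((2:ℂ) • projOnto K - 1) x = (2:ℂ) • projOnto K x - x := by
  simp [ContinuousLinearMap.sub_apply, ContinuousLinearMap.smul_apply]

lemma refl_inner (K : Submodule ℂ H) (x y : H) :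
    ⟪((2:ℂ) • projOnto K - 1) x, y⟫ = ⟪x, ((2:ℂ) • projOnto K - 1) y⟫ := by
  rw [refl_apply, refl_apply, inner_sub_left, inner_sub_right, inner_smul_left, inner_smul_right,
    inner_projOnto]
  norm_num
  left
  simp [map_ofNat]

lemma refl_refl (K : Submodule ℂ H) (x : H) :
    ((2:ℂ) • projOnto K - 1) (((2:ℂ) • projOnto K - 1) x) = x := by
  rw [refl_apply, refl_apply, map_sub, map_smul, projOnto_idem]
  module

lemma span_eigen_nonneg (T : H →L[ℂ] H) (hT : ∀ x y : H, ⟪T x, y⟫ = ⟪x, T y⟫)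
    (V : Set H) (hV : ∀ v ∈ V, ∃ μ : ℝ, 0 ≤ μ ∧ T v = (μ : ℂ) • v)
    {y : H} (hy : y ∈ Submodule.span ℂ V) : 0 ≤ (⟪y, T y⟫).re := by
  set S := Submodule.span ℂ V with hSdef
  have hinv : ∀ x ∈ S, T x ∈ S := by
    intro x hx
    induction hx using Submodule.span_induction with
    | mem v hv =>
      obtain ⟨μ, _, hμ⟩ := hV v hv
      rw [hμ]; exact S.smul_mem _ (Submodule.subset_span hv)
    | zero => simp
    | add a b _ _ ha hb => rw [map_add]; exact S.add_mem ha hb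
    | smul c a _ ha => rw [map_smul]; exact S.smul_mem _ ha
  let T' : S →ₗ[ℂ] S := (T : H →ₗ[ℂ] H).restrict hinv
  have hT'app : ∀ u : S, ((T' u : S) : H) = T (u : H) := fun u => rfl
  have hT' : T'.IsSymmetric := by
    intro u v
    rw [Submodule.coe_inner, Submodule.coe_inner, hT'app, hT'app]
    exact hT _ _
  rcases eq_or_ne y 0 with rfl | hy0
  · simp
  have hnt : Nontrivial S := ⟨⟨⟨y, hy⟩, 0, by simp [Subtype.ext_iff, hy0]⟩⟩
  have hfr : Module.finrank ℂ S = Module.finrank ℂ S := rfl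
  set b := hT'.eigenvectorBasis hfr with hb
  have hev : ∀ i, 0 ≤ hT'.eigenvalues hfr i := by
    intro i
    by_contra hneg
    push_neg at hneg
    set u : S := b i with hu
    have hTu : T (u : H) = ((hT'.eigenvalues hfr i : ℝ) : ℂ) • (u : H) := by
      rw [← hT'app]
      rw [hT'.apply_eigenvectorBasis hfr i]
      simp
      rfl
    have horthV : ∀ v ∈ V, ⟪(u : H), v⟫ = 0 := by
      intro v hv
      obtain ⟨μ, hμ0, hμ⟩ := hV v hv
      have h1 : ⟪T (u : H), v⟫ = ⟪(u : H), T v⟫ := hT _ _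
      rw [hTu, hμ, inner_smul_left, inner_smul_right] at h1
      have h2 : ((hT'.eigenvalues hfr i : ℝ) : ℂ) * ⟪(u : H), v⟫ = (μ : ℂ) * ⟪(u : H), v⟫ := by
        simpa using h1
      have hne : ((hT'.eigenvalues hfr i : ℝ) : ℂ) ≠ (μ : ℂ) := by
        simp only [ne_eq, Complex.ofReal_inj]
        intro h; rw [h] at hneg; linarith
      have := sub_eq_zero.mpr h2
      rw [← sub_mul] at this
      rcases mul_eq_zero.mp this with h | h
      · exact absurd (sub_eq_zero.mp h) hne
      · exact h
    have huS : ∀ x ∈ S, ⟪(u : H), x⟫ = 0 := by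
      intro x hx
      induction hx using Submodule.span_induction with
      | mem v hv => exact horthV v hv
      | zero => simp
      | add a c _ _ ha hc => rw [inner_add_right, ha, hc, add_zero]
      | smul c a _ ha => rw [inner_smul_right, ha, mul_zero]
    have hu0 : (u : H) = 0 := inner_self_eq_zero.mp (huS (u : H) u.2)
    exact (b.toBasis.ne_zero i) (by exact Subtype.ext hu0)
  set yS : S := ⟨y, hy⟩ with hyS
  have key : ⟪y, T y⟫ = ⟪yS, T' yS⟫ := by
    rw [Submodule.coe_inner, hT'app]
  rw [key]
  have h1 : ⟪yS, T' yS⟫ = ⟪b.repr yS, b.repr (T' yS)⟫ := (b.repr.inner_map_map _ _).symm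
  rw [h1, PiLp.inner_apply]
  rw [Complex.re_sum]
  apply Finset.sum_nonneg
  intro i _
  have h2 : b.repr (T' yS) i = (hT'.eigenvalues hfr i : ℂ) * b.repr yS i :=
    hT'.eigenvectorBasis_apply_self_apply hfr yS i
  rw [h2, RCLike.inner_apply]
  have : (hT'.eigenvalues hfr i : ℂ) * b.repr yS i * (starRingEnd ℂ) (b.repr yS i)
      = (hT'.eigenvalues hfr i : ℂ) * ((starRingEnd ℂ) (b.repr yS i) * b.repr yS i) := by ring
  rw [this, Complex.conj_mul']
  rw [← Complex.ofReal_pow, ← Complex.ofReal_mul, Complex.ofReal_re]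
  exact mul_nonneg (hev i) (by positivity)

end aux

/-- **Negative analysis.** If `(w_A, w_B)` is a `δ`-negative witness for the unit vector
`ψ₀` (orthogonal to `B`), then `‖Λ_Θ ψ₀‖ ≤ (Θ/2)‖w_A‖ + 2√δ`. -/
theorem negative_analysis {H : Type*} [NormedAddCommGroup H] [InnerProductSpace ℂ H]
    [FiniteDimensional ℂ H]
    (A B : Submodule ℂ H) (δ : ℝ) (hδ : 0 ≤ δ) (Θ : ℝ) (hΘ : Θ ∈ Set.Ioo 0 Real.pi)
    (ψ₀ wA wB : H) (hψ₀ : ‖ψ₀‖ = 1)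
    (hsplit : ψ₀ = wA + wB)
    (hwA : ‖((1 - projOnto A : H →L[ℂ] H)) wA‖ ^ 2 ≤ δ)
    (hwB : ‖((1 - projOnto B : H →L[ℂ] H)) wB‖ ^ 2 ≤ δ)
    (horth : ψ₀ ∈ Bᗮ) :
    ‖smallPhaseProj (((2:ℂ) • projOnto A - 1) * ((2:ℂ) • projOnto B - 1)) Θ ψ₀‖
      ≤ Θ / 2 * ‖wA‖ + 2 * Real.sqrt δ := by
  obtain ⟨hΘ0, hΘπ⟩ := hΘ
  set RA : H →L[ℂ] H := (2:ℂ) • projOnto A - 1 with hRAdef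
  set RB : H →L[ℂ] H := (2:ℂ) • projOnto B - 1 with hRBdef
  set U : H →L[ℂ] H := RA * RB with hUdef
  set V : Set H := {x : H | ∃ φ : ℝ, |φ| ≤ Θ ∧ U x = Complex.exp (φ * Complex.I) • x} with hVdef
  set S : Submodule ℂ H := Submodule.span ℂ V with hSdef
  have hsp : smallPhaseProj U Θ = projOnto S := rfl
  rw [hsp]
  set y : H := projOnto S ψ₀ with hydef
  -- basic facts
  have hRB2 : ∀ x, RB (RB x) = x := refl_refl B
  have hRA2 : ∀ x, RA (RA x) = x := refl_refl A
  have hRBi : ∀ x z : H, ⟪RB x, z⟫ = ⟪x, RB z⟫ := refl_inner B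
  have hRAi : ∀ x z : H, ⟪RA x, z⟫ = ⟪x, RA z⟫ := refl_inner A
  have hUapp : ∀ x, U x = RA (RB x) := fun x => rfl
  have hyS : y ∈ S := projOnto_mem S ψ₀
  -- RB maps the spanning set into itself
  have hRBV : ∀ v ∈ V, RB v ∈ V := by
    rintro v ⟨φ, hφ, hv⟩
    refine ⟨-φ, by rwa [abs_neg], ?_⟩
    have h1 : RA (RB v) = Complex.exp (φ * Complex.I) • v := hv
    have h2 : RB v = Complex.exp (φ * Complex.I) • RA v := by
      have := congrArg RA h1
      rwa [hRA2, map_smul] at this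
    have h3 : U (RB v) = RA v := by rw [hUapp, hRB2]
    rw [h3, h2, smul_smul, ← Complex.exp_add]
    rw [show ((-φ : ℝ) : ℂ) * Complex.I + (φ : ℝ) * Complex.I = 0 by push_cast; ring]
    rw [Complex.exp_zero, one_smul]
  have hRBS : ∀ x ∈ S, RB x ∈ S := by
    intro x hx
    rw [hSdef] at hx ⊢
    induction hx using Submodule.span_induction with
    | mem v hv => exact Submodule.subset_span (hRBV v hv)
    | zero => simp
    | add a b _ _ ha hb => rw [map_add]; exact Submodule.add_mem _ ha hb
    | smul c a _ ha => rw [map_smul]; exact Submodule.smul_mem _ _ ha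
  have hPψ : projOnto B ψ₀ = 0 := projOnto_of_orth B horth
  have hRBψ : RB ψ₀ = -ψ₀ := by
    rw [hRBdef, refl_apply, hPψ, smul_zero, zero_sub]
  -- RB y = -y
  have hRBy : RB y = -y := by
    have huniq : (S.orthogonalProjectionOnto ψ₀ : H) = -(RB y) := by
      apply Submodule.eq_starProjection_of_mem_of_inner_eq_zero (K := S)
      · exact S.neg_mem (hRBS y hyS)
      · intro w hw
        have h3 : ψ₀ - -(RB y) = RB (y - ψ₀) := by
          rw [map_sub, hRBψ]; abel
        rw [h3, hRBi]
        have h4 : ⟪ψ₀ - y, RB w⟫ = 0 :=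
          Submodule.starProjection_inner_eq_zero (K := S) ψ₀ (RB w) (hRBS w hw)
        have h5 : y - ψ₀ = -(ψ₀ - y) := by abel
        rw [h5, inner_neg_left, h4, neg_zero]
    have h6 : y = -(RB y) := huniq
    rw [eq_comm, neg_eq_iff_eq_neg] at h6
    exact h6
  have hPy : projOnto B y = 0 := by
    have h := hRBy
    rw [hRBdef, refl_apply] at h
    have h2 : (2:ℂ) • projOnto B y = 0 := by
      have := congrArg (· + y) h
      simpa using this
    rcases smul_eq_zero.mp h2 with h | h
    · norm_num at h
    · exact h
  have hQy : (2:ℂ) • projOnto A y = y - U y := by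
    have h1 : RA y = -(U y) := by
      have h : U (RB y) = RA y := by rw [hUapp, hRB2]
      rw [hRBy, map_neg] at h
      exact h.symm
    rw [hRAdef, refl_apply] at h1
    have := congrArg (· + y) h1
    simp only [sub_add_cancel] at this
    rw [this]; abel
  -- norm preservation
  have hUnorm : ⟪U y, U y⟫ = ⟪y, y⟫ := by
    rw [hUapp, hRAi, hRA2, hRBi, hRB2]
  -- spectral bound
  have hcos : Real.cos Θ * ‖y‖ ^ 2 ≤ (⟪y, U y⟫).re := by
    set c : ℝ := 2 * Real.cos Θ with hc
    set T : H →L[ℂ] H := U + RB * RA - (c : ℂ) • 1 with hT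
    have hTapp : ∀ x, T x = U x + RB (RA x) - (c : ℂ) • x := by
      intro x
      simp [hT, ContinuousLinearMap.sub_apply, ContinuousLinearMap.add_apply,
        ContinuousLinearMap.smul_apply, ContinuousLinearMap.mul_apply]
    have e1 : ∀ x w : H, ⟪U x, w⟫ = ⟪x, RB (RA w)⟫ := by
      intro x w; rw [hUapp, hRAi, hRBi]
    have e2 : ∀ x w : H, ⟪RB (RA x), w⟫ = ⟪x, U w⟫ := by
      intro x w; rw [hUapp w, hRBi, hRAi]
    have hTsym : ∀ x w : H, ⟪T x, w⟫ = ⟪x, T w⟫ := by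
      intro x w
      rw [hTapp, hTapp, inner_sub_left, inner_sub_right, inner_add_left, inner_add_right,
        inner_smul_left, inner_smul_right, e1, e2, Complex.conj_ofReal]
      ring
    have hVT : ∀ v ∈ V, ∃ μ : ℝ, 0 ≤ μ ∧ T v = (μ : ℂ) • v := by
      rintro v ⟨φ, hφ, hv⟩
      refine ⟨2 * Real.cos φ - c, ?_, ?_⟩
      · have h0 : Real.cos Θ ≤ Real.cos |φ| :=
          Real.cos_le_cos_of_nonneg_of_le_pi (abs_nonneg φ) (le_of_lt hΘπ) hφ
        rw [Real.cos_abs] at h0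
        rw [hc]; linarith
      · have hUv : U v = Complex.exp ((φ : ℝ) * Complex.I) • v := hv
        have hstar : RB (RA v) = Complex.exp (-((φ : ℝ) * Complex.I)) • v := by
          have h1 : RB (RA (U v)) = v := by rw [hUapp, hRA2, hRB2]
          rw [hUv, map_smul, map_smul] at h1
          have := congrArg (fun t => Complex.exp (-((φ : ℝ) * Complex.I)) • t) h1
          simp only [smul_smul, ← Complex.exp_add, neg_add_cancel, Complex.exp_zero,
            one_smul] at this
          exact this
        rw [hTapp, hUv, hstar]
        rw [← add_smul, ← sub_smul]
        congr 1
        have hsum : Complex.exp ((φ : ℝ) * Complex.I) + Complex.exp (-((φ : ℝ) * Complex.I))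
            = ((2 * Real.cos φ : ℝ) : ℂ) := by
          rw [show -((φ : ℝ) * Complex.I) = ((-φ : ℝ) : ℂ) * Complex.I by push_cast; ring]
          rw [Complex.exp_mul_I, Complex.exp_mul_I]
          rw [show ((-φ : ℝ) : ℂ) = -((φ : ℝ) : ℂ) by push_cast; ring]
          rw [Complex.cos_neg, Complex.sin_neg, ← Complex.ofReal_cos]
          push_cast
          ring
        rw [hsum]
        push_cast
        ring
    have h0 : 0 ≤ (⟪y, T y⟫).re := by
      apply span_eigen_nonneg T hTsym V hVT
      rw [← hSdef]; exact hyS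
    have e3 : ⟪y, RB (RA y)⟫ = (starRingEnd ℂ) ⟪y, U y⟫ := by
      rw [← inner_conj_symm, e2]
    have e4 : ⟪y, T y⟫ = ⟪y, U y⟫ + (starRingEnd ℂ) ⟪y, U y⟫ - (c : ℂ) * ⟪y, y⟫ := by
      rw [hTapp, inner_sub_right, inner_add_right, inner_smul_right, e3]
    have e5 : ⟪y, y⟫ = ((‖y‖ ^ 2 : ℝ) : ℂ) := by
      rw [inner_self_eq_norm_sq_to_K]; norm_cast
    rw [e4, e5] at h0
    simp only [Complex.sub_re, Complex.add_re, Complex.conj_re, Complex.mul_re,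
      Complex.ofReal_re, Complex.ofReal_im, zero_mul, sub_zero] at h0
    rw [hc] at h0
    linarith
  -- norm bound on (1 - U) y
  have hUynorm : ‖U y‖ = ‖y‖ := by
    have h2 : ‖U y‖ ^ 2 = ‖y‖ ^ 2 := by
      have a1 : (⟪U y, U y⟫).re = ‖U y‖ ^ 2 := by
        rw [inner_self_eq_norm_sq_to_K]; norm_cast
      have a2 : (⟪y, y⟫).re = ‖y‖ ^ 2 := by
        rw [inner_self_eq_norm_sq_to_K]; norm_cast
      rw [← a1, ← a2, hUnorm]
    rw [← Real.sqrt_sq (norm_nonneg (U y)), h2, Real.sqrt_sq (norm_nonneg y)]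
  have hyU : ‖y - U y‖ ≤ Θ * ‖y‖ := by
    have h3 : ‖y - U y‖ ^ 2 = 2 * ‖y‖ ^ 2 - 2 * (⟪y, U y⟫).re := by
      have := @norm_sub_sq ℂ _ _ _ _ y (U y)
      rw [hUynorm] at this
      rw [this]
      simp only [RCLike.re_to_complex]
      ring
    have h5 : 1 - Θ ^ 2 / 2 ≤ Real.cos Θ := Real.one_sub_sq_div_two_le_cos
    have h6 : (2 - 2 * Real.cos Θ) * ‖y‖ ^ 2 ≤ Θ ^ 2 * ‖y‖ ^ 2 :=
      mul_le_mul_of_nonneg_right (by linarith) (sq_nonneg _)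
    have h2 : ‖y - U y‖ ^ 2 ≤ (Θ * ‖y‖) ^ 2 := by
      have : (Θ * ‖y‖) ^ 2 = Θ ^ 2 * ‖y‖ ^ 2 := by ring
      rw [this, h3]
      nlinarith [hcos]
    have := Real.sqrt_le_sqrt h2
    rwa [Real.sqrt_sq (norm_nonneg _), Real.sqrt_sq (by positivity)] at this
  -- assemble
  have hsq : ‖y‖ ^ 2 = (⟪ψ₀, y⟫).re := by
    have h1 : ⟪y, y⟫ = ⟪ψ₀, y⟫ := by
      have h := inner_projOnto S ψ₀ y
      rw [projOnto_of_mem S hyS] at h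
      exact h
    rw [← h1, inner_self_eq_norm_sq_to_K]; norm_cast
  have hwAb : ‖wA - projOnto A wA‖ ≤ Real.sqrt δ := by
    have h : (1 - projOnto A : H →L[ℂ] H) wA = wA - projOnto A wA := by
      simp [ContinuousLinearMap.sub_apply]
    rw [← h, ← Real.sqrt_sq (norm_nonneg ((1 - projOnto A : H →L[ℂ] H) wA))]
    exact Real.sqrt_le_sqrt hwA
  have hwBb : ‖wB - projOnto B wB‖ ≤ Real.sqrt δ := by
    have h : (1 - projOnto B : H →L[ℂ] H) wB = wB - projOnto B wB := by
      simp [ContinuousLinearMap.sub_apply]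
    rw [← h, ← Real.sqrt_sq (norm_nonneg ((1 - projOnto B : H →L[ℂ] H) wB))]
    exact Real.sqrt_le_sqrt hwB
  have t1 : (⟪wB, y⟫).re ≤ Real.sqrt δ * ‖y‖ := by
    have hsB : ⟪wB, y⟫ = ⟪wB - projOnto B wB, y⟫ + ⟪projOnto B wB, y⟫ := by
      rw [← inner_add_left, sub_add_cancel]
    have hz : ⟪projOnto B wB, y⟫ = 0 := by
      rw [inner_projOnto, hPy, inner_zero_right]
    rw [hsB, hz, add_zero]
    calc (⟪wB - projOnto B wB, y⟫).re ≤ ‖⟪wB - projOnto B wB, y⟫‖ := Complex.re_le_norm _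
      _ ≤ ‖wB - projOnto B wB‖ * ‖y‖ := norm_inner_le_norm _ _
      _ ≤ Real.sqrt δ * ‖y‖ := mul_le_mul_of_nonneg_right hwBb (norm_nonneg y)
  have hQynorm : ‖projOnto A y‖ ≤ Θ / 2 * ‖y‖ := by
    have h1 : ‖(2:ℂ) • projOnto A y‖ = 2 * ‖projOnto A y‖ := by
      rw [norm_smul]; norm_num
    have h2 : 2 * ‖projOnto A y‖ ≤ Θ * ‖y‖ := by
      rw [← h1, hQy]; exact hyU
    linarith
  have t2 : (⟪wA, y⟫).re ≤ Real.sqrt δ * ‖y‖ + Θ / 2 * ‖wA‖ * ‖y‖ := by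
    have hsA : ⟪wA, y⟫ = ⟪wA - projOnto A wA, y⟫ + ⟪projOnto A wA, y⟫ := by
      rw [← inner_add_left, sub_add_cancel]
    have hq : ⟪projOnto A wA, y⟫ = ⟪wA, projOnto A y⟫ := inner_projOnto A wA y
    rw [hsA, hq, Complex.add_re]
    have b1 : (⟪wA - projOnto A wA, y⟫).re ≤ Real.sqrt δ * ‖y‖ := by
      calc (⟪wA - projOnto A wA, y⟫).re ≤ ‖⟪wA - projOnto A wA, y⟫‖ := Complex.re_le_norm _
        _ ≤ ‖wA - projOnto A wA‖ * ‖y‖ := norm_inner_le_norm _ _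
        _ ≤ Real.sqrt δ * ‖y‖ := mul_le_mul_of_nonneg_right hwAb (norm_nonneg y)
    have b2 : (⟪wA, projOnto A y⟫).re ≤ Θ / 2 * ‖wA‖ * ‖y‖ := by
      calc (⟪wA, projOnto A y⟫).re ≤ ‖⟪wA, projOnto A y⟫‖ := Complex.re_le_norm _
        _ ≤ ‖wA‖ * ‖projOnto A y‖ := norm_inner_le_norm _ _
        _ ≤ ‖wA‖ * (Θ / 2 * ‖y‖) := mul_le_mul_of_nonneg_left hQynorm (norm_nonneg wA)
        _ = Θ / 2 * ‖wA‖ * ‖y‖ := by ring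
    linarith
  have hkey : ‖y‖ ^ 2 ≤ (Θ / 2 * ‖wA‖ + 2 * Real.sqrt δ) * ‖y‖ := by
    have h1 : ⟪ψ₀, y⟫ = ⟪wA, y⟫ + ⟪wB, y⟫ := by
      rw [hsplit, inner_add_left]
    rw [hsq, h1, Complex.add_re]
    have := add_le_add t2 t1
    linarith
  rcases eq_or_lt_of_le (norm_nonneg y) with h | h
  · rw [← h]
    have : 0 ≤ Θ / 2 * ‖wA‖ := mul_nonneg (by linarith) (norm_nonneg wA)
    have : 0 ≤ 2 * Real.sqrt δ := by positivity
    linarith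
  · have h2 : ‖y‖ * ‖y‖ ≤ (Θ / 2 * ‖wA‖ + 2 * Real.sqrt δ) * ‖y‖ := by
      rw [← pow_two]; exact hkey
    exact le_of_mul_le_mul_right h2 h
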